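/- Let f : ℝ^d → ℝ be differentiable with L-Lipschitz gradient (L > 0), bounded below with finite infimum f^inf = inf_x f(x), and suppose f satisfies the Polyak–Łojasiewicz condition with parameter μ > 0: ‖∇f(x)‖² ≥ 2μ(f(x) − f^inf) for all x ∈ ℝ^d. If f is not constant (i.e. there exists y with ∇f(y) ≠ 0), then μ ≤ L. -/

import Mathlib

open scoped RealInnerProductSpace

lemma descent_lemma {d : ℕ} (f : EuclideanSpace ℝ (Fin d) → ℝ)
    (hdiff : Differentiable ℝ f) (L : ℝ) (hL : 0 ≤ L)
    (hlip : ∀ x y : EuclideanSpace ℝ (Fin d),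
      ‖gradient f x - gradient f y‖ ≤ L * ‖x - y‖)
    (x v : EuclideanSpace ℝ (Fin d)) :
    f (x + v) ≤ f x + ⟪gradient f x, v⟫ + L / 2 * ‖v‖ ^ 2 := by
  set g : EuclideanSpace ℝ (Fin d) → EuclideanSpace ℝ (Fin d) := gradient f
  have hc : ∀ t : ℝ, HasDerivAt (fun t : ℝ => x + t • v) v t := by
    intro t
    simpa using ((hasDerivAt_id t).smul_const v).const_add x
  have hφ : ∀ t : ℝ, HasDerivAt (fun t : ℝ => f (x + t • v)) ⟪g (x + t • v), v⟫ t := by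
    intro t
    have hg := (hdiff (x + t • v)).hasGradientAt
    have := hg.hasFDerivAt.comp_hasDerivAt t (hc t)
    simpa [g, inner_gradient_left, Function.comp_def] using this
  set ψ : ℝ → ℝ := fun t => f (x + t • v) - ⟪g x, v⟫ * t - L / 2 * ‖v‖ ^ 2 * t ^ 2 with hψdef
  have hψ : ∀ t : ℝ, HasDerivAt ψ
      (⟪g (x + t • v), v⟫ - ⟪g x, v⟫ - L * ‖v‖ ^ 2 * t) t := by
    intro t
    have h1 := ((hφ t).sub ((hasDerivAt_id t).const_mul ⟪g x, v⟫)).sub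
      (((hasDerivAt_pow 2 t)).const_mul (L / 2 * ‖v‖ ^ 2))
    refine h1.congr_deriv ?_
    norm_num
    ring
  have hant : AntitoneOn ψ (Set.Icc 0 1) := by
    apply antitoneOn_of_deriv_nonpos (convex_Icc 0 1)
    · exact fun t _ => (hψ t).continuousAt.continuousWithinAt
    · exact fun t ht => ((hψ t).differentiableAt).differentiableWithinAt
    · intro t ht
      rw [interior_Icc] at ht
      rw [(hψ t).deriv]
      have hinner : ⟪g (x + t • v) - g x, v⟫ ≤ ‖g (x + t • v) - g x‖ * ‖v‖ :=
        real_inner_le_norm _ _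
      have hnorm : ‖g (x + t • v) - g x‖ ≤ L * (t * ‖v‖) := by
        have := hlip (x + t • v) x
        simpa [norm_smul, abs_of_pos ht.1] using this
      have hv : (0:ℝ) ≤ ‖v‖ := norm_nonneg _
      nlinarith [inner_sub_left (𝕜 := ℝ) (g (x + t • v)) (g x) v,
        mul_le_mul_of_nonneg_right hnorm hv]
  have h01 := hant (Set.left_mem_Icc.mpr zero_le_one) (Set.right_mem_Icc.mpr zero_le_one)
    zero_le_one
  simp only [hψdef] at h01
  simp only [zero_smul, add_zero, one_smul, mul_zero, mul_one, sub_zero, one_pow,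
    zero_pow] at h01
  linarith [h01]

/-- Lemma 5 of the paper. If `f` has an `L`-Lipschitz gradient, is
bounded below with finite infimum `f^inf`, satisfies the PŁ condition with `μ > 0`, and is
not constant (some gradient is nonzero), then `μ ≤ L`. -/
theorem PL_constant_le_lipschitz_constant
    {d : ℕ}
    (f : EuclideanSpace ℝ (Fin d) → ℝ) (hdiff : Differentiable ℝ f)
    (L : ℝ) (hL : 0 < L)
    (hlip : ∀ x y : EuclideanSpace ℝ (Fin d),
      ‖gradient f x - gradient f y‖ ≤ L * ‖x - y‖)
    (finf : ℝ) (hinf : IsGLB (Set.range f) finf)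
    (μ : ℝ) (hμ : 0 < μ)
    (hPL : ∀ x : EuclideanSpace ℝ (Fin d), ‖gradient f x‖ ^ 2 ≥ 2 * μ * (f x - finf))
    (hnonconst : ∃ y : EuclideanSpace ℝ (Fin d), gradient f y ≠ 0) :
    μ ≤ L := by
  obtain ⟨x, hx⟩ := hnonconst
  set g := gradient f x with hg
  have hdesc := descent_lemma f hdiff L hL.le hlip x (-(1 / L) • g)
  have hinner : ⟪g, -(1 / L) • g⟫ = -(1 / L) * ‖g‖ ^ 2 := by
    rw [real_inner_smul_right, real_inner_self_eq_norm_sq]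
  have hnorm : ‖-(1 / L) • g‖ ^ 2 = (1 / L) ^ 2 * ‖g‖ ^ 2 := by
    rw [norm_smul, Real.norm_eq_abs, abs_neg, abs_of_pos (by positivity : (0:ℝ) < 1 / L)]
    ring
  rw [hinner, hnorm] at hdesc
  have hge : finf ≤ f (x + -(1 / L) • g) := hinf.1 (Set.mem_range_self _)
  have hPLx := hPL x
  have hgpos : 0 < ‖g‖ ^ 2 := pow_pos (norm_pos_iff.mpr hx) 2
  have h2L : (0:ℝ) < 2 * L := by linarith
  have heq : f x + -(1 / L) * ‖g‖ ^ 2 + L / 2 * ((1 / L) ^ 2 * ‖g‖ ^ 2)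
      = f x - ‖g‖ ^ 2 / (2 * L) := by
    field_simp
    ring
  rw [heq] at hdesc
  have h1 : ‖g‖ ^ 2 / (2 * L) ≤ f x - finf := by linarith
  have key2 : ‖g‖ ^ 2 ≤ 2 * L * (f x - finf) := by
    rw [div_le_iff₀ h2L] at h1
    linarith [h1]
  nlinarith [hgpos, hPLx, key2]
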